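/- arXiv:2302.06834 — 2 statements merged into one kernel-verified Lean document; each statement's English description precedes it below -/
import Mathlib

section
/- Let ℓ : Ω → ℝ be a random variable with |ℓ| ≤ 1, let Σ be a fixed d×d positive definite matrix, and let Φ be an ℝ^d-valued random vector, with E[Φ Φᵀ] = Σ. Define the random vector θ̂ = Σ⁻¹ Φ ℓ. Then for any fixed ψ ∈ ℝ^d, E[(ψᵀ θ̂)²] ≤ ψᵀ Σ⁻¹ ψ. -/
/-! Writing `v = Σ⁻¹ ψ`, symmetry of `Σ⁻¹` gives `ψᵀ θ̂ = ℓ · vᵀ Φ`, so `(ψᵀ θ̂)² ≤ (vᵀ Φ)²`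
because `|ℓ| ≤ 1`. The second moment `E[(vᵀ Φ)²] = vᵀ E[Φ Φᵀ] v = vᵀ Σ v` then equals
`ψᵀ Σ⁻¹ ψ`. -/

open Matrix MeasureTheory

section SecondMoment

variable {ι Ω : Type*} [Fintype ι] [MeasurableSpace Ω] {μ : Measure Ω}

theorem dotProduct_sq_eq_sum_sum (v x : ι → ℝ) :
    (v ⬝ᵥ x) ^ 2 = ∑ i, ∑ j, v i * v j * (x i * x j) := by
  simp only [sq, dotProduct, Finset.sum_mul_sum]
  exact Finset.sum_congr rfl fun i _ => Finset.sum_congr rfl fun j _ => by ring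

theorem integrable_dotProduct_sq {Φ : Ω → ι → ℝ}
    (hint : ∀ i j, Integrable (fun ω => Φ ω i * Φ ω j) μ) (v : ι → ℝ) :
    Integrable (fun ω => (v ⬝ᵥ Φ ω) ^ 2) μ := by
  simp only [dotProduct_sq_eq_sum_sum]
  exact integrable_finsetSum _ fun i _ =>
    integrable_finsetSum _ fun j _ => (hint i j).const_mul _

theorem integral_dotProduct_sq {Φ : Ω → ι → ℝ} {S : Matrix ι ι ℝ}
    (hmom : ∀ i j, ∫ ω, Φ ω i * Φ ω j ∂μ = S i j)
    (hint : ∀ i j, Integrable (fun ω => Φ ω i * Φ ω j) μ) (v : ι → ℝ) :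
    ∫ ω, (v ⬝ᵥ Φ ω) ^ 2 ∂μ = v ⬝ᵥ (S *ᵥ v) := by
  simp only [dotProduct_sq_eq_sum_sum]
  rw [integral_finsetSum _ fun i _ =>
    integrable_finsetSum _ fun j _ => (hint i j).const_mul _]
  simp only [fun i => integral_finsetSum Finset.univ fun j _ => (hint i j).const_mul (v i * v j),
    integral_const_mul, hmom, dotProduct, mulVec, Finset.mul_sum]
  exact Finset.sum_congr rfl fun i _ => Finset.sum_congr rfl fun j _ => by ring

end SecondMoment

theorem dotProduct_mulVec_smul_of_isSymm {ι : Type*} [Fintype ι] {A : Matrix ι ι ℝ}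
    (hA : A.IsSymm) (ψ x : ι → ℝ) (c : ℝ) :
    ψ ⬝ᵥ (A *ᵥ (c • x)) = c * ((A *ᵥ ψ) ⬝ᵥ x) := by
  rw [dotProduct_mulVec, ← mulVec_transpose, hA.eq, dotProduct_smul, smul_eq_mul]

theorem sq_mul_le_sq_of_abs_le_one {c y : ℝ} (hc : |c| ≤ 1) : (c * y) ^ 2 ≤ y ^ 2 := by
  rw [mul_pow]
  exact mul_le_of_le_one_left (sq_nonneg y) ((sq_le_one_iff_abs_le_one c).mpr hc)

theorem stmt_9_general (d : ℕ) (Ω : Type*) [MeasurableSpace Ω]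
    (μ : Measure Ω) [IsProbabilityMeasure μ]
    (ℓ : Ω → ℝ) (hℓ : ∀ ω, |ℓ ω| ≤ 1)
    (Φ : Ω → (Fin d → ℝ))
    (S : Matrix (Fin d) (Fin d) ℝ) (hS : S.PosDef)
    (hmom : ∀ i j, ∫ ω, Φ ω i * Φ ω j ∂μ = S i j)
    (hint : ∀ i j, Integrable (fun ω => Φ ω i * Φ ω j) μ)
    (θhat : Ω → (Fin d → ℝ))
    (hθhat : ∀ ω, θhat ω = S⁻¹ *ᵥ (ℓ ω • Φ ω))
    (ψ : Fin d → ℝ) :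
    ∫ ω, (ψ ⬝ᵥ θhat ω) ^ 2 ∂μ ≤ ψ ⬝ᵥ (S⁻¹ *ᵥ ψ) := by
  have hSinv_symm : S⁻¹.IsSymm := hS.inv.isHermitian
  have hθhat_proj : ∀ ω, ψ ⬝ᵥ θhat ω = ℓ ω * ((S⁻¹ *ᵥ ψ) ⬝ᵥ Φ ω) := fun ω => by
    rw [hθhat, dotProduct_mulVec_smul_of_isSymm hSinv_symm]
  calc ∫ ω, (ψ ⬝ᵥ θhat ω) ^ 2 ∂μ ≤ ∫ ω, ((S⁻¹ *ᵥ ψ) ⬝ᵥ Φ ω) ^ 2 ∂μ :=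
        integral_mono_of_nonneg (.of_forall fun ω => sq_nonneg _)
          (integrable_dotProduct_sq hint _)
          (.of_forall fun ω => by
            simpa only [hθhat_proj] using sq_mul_le_sq_of_abs_le_one (hℓ ω))
    _ = (S⁻¹ *ᵥ ψ) ⬝ᵥ (S *ᵥ (S⁻¹ *ᵥ ψ)) := integral_dotProduct_sq hmom hint _
    _ = ψ ⬝ᵥ (S⁻¹ *ᵥ ψ) := by
        rw [mulVec_mulVec, mul_nonsing_inv _ ((isUnit_iff_isUnit_det S).mp hS.isUnit), one_mulVec,
          dotProduct_comm]

theorem stmt_9 (d : ℕ) (Ω : Type*) [MeasurableSpace Ω]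
    (μ : Measure Ω) [IsProbabilityMeasure μ]
    (ℓ : Ω → ℝ) (hℓ : ∀ ω, |ℓ ω| ≤ 1)
    (Φ : Ω → (Fin d → ℝ))
    (S : Matrix (Fin d) (Fin d) ℝ) (hS : S.PosDef) (hSs : S.IsSymm)
    (hmom : ∀ i j, ∫ ω, Φ ω i * Φ ω j ∂μ = S i j)
    (hint : ∀ i j, Integrable (fun ω => Φ ω i * Φ ω j) μ)
    (θhat : Ω → (Fin d → ℝ))
    (hθhat : ∀ ω, θhat ω = S⁻¹ *ᵥ (ℓ ω • Φ ω))
    (ψ : Fin d → ℝ) :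
    ∫ ω, (ψ ⬝ᵥ θhat ω) ^ 2 ∂μ ≤ ψ ⬝ᵥ (S⁻¹ *ᵥ ψ) :=
  stmt_9_general d Ω μ ℓ hℓ Φ S hS hmom hint θhat hθhat ψ
end

section
/- Let Π be a finite set, p : Π → [0,1] a probability distribution, φ_π ∈ ℝ^d for each π, Σ = Σ_π p(π) φ_π φ_πᵀ invertible, and θ_true ∈ ℝ^d. Suppose for each π there is φ̂_π ∈ ℝ^d with sup_π |φ̂_πᵀ Σ̂⁻¹ φ̂_{π'}| ≤ M for all π, π' (where Σ̂ = Σ_π p(π) φ̂_π φ̂_πᵀ is invertible) and |(φ_π - φ̂_π)ᵀ θ_true| ≤ ε for all π. Define θ_exp := Σ̂⁻¹ Σ_{π'} p(π') φ̂_{π'} φ_{π'}ᵀ θ_true. Then for every π ∈ Π: |φ̂_πᵀ θ_exp - φ̂_πᵀ θ_true| ≤ M ε, and hence |φ̂_πᵀ θ_exp - φ_πᵀ θ_true| ≤ (M+1) ε. -/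
open Matrix Finset

lemma my_mulVec_sum {d : ℕ} {ι : Type*} (s : Finset ι) (A : Matrix (Fin d) (Fin d) ℝ)
    (f : ι → (Fin d → ℝ)) : A *ᵥ (∑ i ∈ s, f i) = ∑ i ∈ s, A *ᵥ f i := by
  ext j
  simp [mulVec, dotProduct, Finset.sum_apply, Finset.mul_sum]
  rw [Finset.sum_comm]

lemma my_sum_mulVec {d : ℕ} {ι : Type*} (s : Finset ι) (A : ι → Matrix (Fin d) (Fin d) ℝ)
    (x : Fin d → ℝ) : (∑ i ∈ s, A i) *ᵥ x = ∑ i ∈ s, A i *ᵥ x := by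
  ext j
  simp [mulVec, dotProduct, Matrix.sum_apply, Finset.sum_mul]
  rw [Finset.sum_comm]

lemma my_dotProduct_sum {d : ℕ} {ι : Type*} (s : Finset ι) (v : Fin d → ℝ)
    (f : ι → (Fin d → ℝ)) : v ⬝ᵥ (∑ i ∈ s, f i) = ∑ i ∈ s, v ⬝ᵥ f i := by
  simp [dotProduct, Finset.sum_apply, Finset.mul_sum]
  rw [Finset.sum_comm]

lemma my_vecMulVec_mulVec {d : ℕ} (v w x : Fin d → ℝ) :
    vecMulVec v w *ᵥ x = (w ⬝ᵥ x) • v := by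
  ext i
  simp [mulVec, dotProduct, vecMulVec_apply, Finset.mul_sum, mul_comm, mul_assoc, mul_left_comm]

theorem stmt_10 (d : ℕ) (Pi : Type*) [Fintype Pi] [Nonempty Pi]
    (p : Pi → ℝ) (hp0 : ∀ π, 0 ≤ p π) (hp1 : ∑ π, p π = 1)
    (φ φhat : Pi → (Fin d → ℝ))
    (Shat : Matrix (Fin d) (Fin d) ℝ)
    (hShat : Shat = ∑ π, p π • vecMulVec (φhat π) (φhat π))
    (hinv : IsUnit Shat.det)
    (θtrue : Fin d → ℝ) (M ε : ℝ)
    (hM : ∀ π π', |φhat π ⬝ᵥ (Shat⁻¹ *ᵥ φhat π')| ≤ M)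
    (hε : ∀ π, |(φ π - φhat π) ⬝ᵥ θtrue| ≤ ε)
    (θexp : Fin d → ℝ)
    (hθexp : θexp = Shat⁻¹ *ᵥ ∑ π', p π' • ((φ π' ⬝ᵥ θtrue) • φhat π')) :
    ∀ π : Pi, |φhat π ⬝ᵥ θexp - φhat π ⬝ᵥ θtrue| ≤ M * ε ∧
      |φhat π ⬝ᵥ θexp - φ π ⬝ᵥ θtrue| ≤ (M + 1) * ε := by
  have hM0 : 0 ≤ M := le_trans (abs_nonneg _) (hM Classical.ofNonempty Classical.ofNonempty)
  have hε0 : 0 ≤ ε := le_trans (abs_nonneg _) (hε Classical.ofNonempty)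
  have hSθ : Shat *ᵥ θtrue = ∑ π', p π' • ((φhat π' ⬝ᵥ θtrue) • φhat π') := by
    rw [hShat, my_sum_mulVec]
    refine Finset.sum_congr rfl fun π' _ => ?_
    rw [smul_mulVec, my_vecMulVec_mulVec]
  have key : ∀ π, φhat π ⬝ᵥ θexp - φhat π ⬝ᵥ θtrue
      = ∑ π', p π' * (((φ π' - φhat π') ⬝ᵥ θtrue) * (φhat π ⬝ᵥ (Shat⁻¹ *ᵥ φhat π'))) := by
    intro π
    have hdiff : θexp - θtrue
        = Shat⁻¹ *ᵥ ((∑ π', p π' • ((φ π' ⬝ᵥ θtrue) • φhat π')) - Shat *ᵥ θtrue) := by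
      rw [Matrix.mulVec_sub, mulVec_mulVec, Matrix.nonsing_inv_mul _ hinv, one_mulVec, hθexp]
    have hsum : (∑ π', p π' • ((φ π' ⬝ᵥ θtrue) • φhat π')) - Shat *ᵥ θtrue
        = ∑ π', p π' • (((φ π' - φhat π') ⬝ᵥ θtrue) • φhat π') := by
      rw [hSθ, ← Finset.sum_sub_distrib]
      refine Finset.sum_congr rfl fun π' _ => ?_
      rw [← smul_sub, ← sub_smul, sub_dotProduct]
    have h2 : φhat π ⬝ᵥ (θexp - θtrue)
        = ∑ π', p π' * (((φ π' - φhat π') ⬝ᵥ θtrue) * (φhat π ⬝ᵥ (Shat⁻¹ *ᵥ φhat π'))) := by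
      rw [hdiff, hsum, my_mulVec_sum, my_dotProduct_sum]
      refine Finset.sum_congr rfl fun π' _ => ?_
      rw [Matrix.mulVec_smul, dotProduct_smul, Matrix.mulVec_smul, dotProduct_smul]
      simp [smul_eq_mul, mul_comm, mul_assoc, mul_left_comm]
    rw [← h2, dotProduct_sub]
  intro π
  have hbound : |φhat π ⬝ᵥ θexp - φhat π ⬝ᵥ θtrue| ≤ M * ε := by
    rw [key π]
    calc |∑ π', p π' * (((φ π' - φhat π') ⬝ᵥ θtrue) * (φhat π ⬝ᵥ (Shat⁻¹ *ᵥ φhat π')))|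
        ≤ ∑ π', |p π' * (((φ π' - φhat π') ⬝ᵥ θtrue) * (φhat π ⬝ᵥ (Shat⁻¹ *ᵥ φhat π')))| :=
          Finset.abs_sum_le_sum_abs _ _
      _ ≤ ∑ π', p π' * (ε * M) := by
          refine Finset.sum_le_sum fun π' _ => ?_
          rw [abs_mul, abs_mul, abs_of_nonneg (hp0 π')]
          exact mul_le_mul_of_nonneg_left
            (mul_le_mul (hε π') (hM π π') (abs_nonneg _) hε0) (hp0 π')
      _ = M * ε := by rw [← Finset.sum_mul, hp1, one_mul, mul_comm]
  refine ⟨hbound, ?_⟩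
  have : φhat π ⬝ᵥ θexp - φ π ⬝ᵥ θtrue
      = (φhat π ⬝ᵥ θexp - φhat π ⬝ᵥ θtrue) - ((φ π - φhat π) ⬝ᵥ θtrue) := by
    rw [sub_dotProduct]; ring
  rw [this]
  calc |(φhat π ⬝ᵥ θexp - φhat π ⬝ᵥ θtrue) - ((φ π - φhat π) ⬝ᵥ θtrue)|
      ≤ |φhat π ⬝ᵥ θexp - φhat π ⬝ᵥ θtrue| + |(φ π - φhat π) ⬝ᵥ θtrue| := abs_sub _ _
    _ ≤ M * ε + ε := add_le_add hbound (hε π)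
    _ = (M + 1) * ε := by ring
end
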